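/- Let H be a real inner product space with dim H ≥ 3, and let ξ, η be unit vectors in H with η ≠ ξ and η ≠ −ξ. Then there exist a natural number k ≥ 1 and a unit vector η′ in H such that ⟪ξ, η′⟫ = ⟪ξ, η⟫ and ⟪η, η′⟫ = cos(π / 2^k). -/

import Mathlib

/-!
Write `c = ⟪ξ, η⟫`, so `c² < 1`. Since `dim H ≥ 3` there is a unit vector `w` orthogonal to
both `ξ` and `η`. Rotating the component `η - c • ξ` of `η` towards `w` keeps the inner product
with `ξ` equal to `c` and makes `⟪η, η'⟫` sweep out the whole interval `[2c² - 1, 1]`.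
As `cos (π / 2 ^ k) → 1`, some `k ≥ 1` has `cos (π / 2 ^ k)` in that interval.
-/

open RealInnerProductSpace Real

open Filter Topology Set

section

variable {H : Type*} [NormedAddCommGroup H] [InnerProductSpace ℝ H]

theorem sq_real_inner_lt_one_of_ne {x y : H} (hx : ‖x‖ = 1) (hy : ‖y‖ = 1)
    (h₁ : y ≠ x) (h₂ : y ≠ -x) : ⟪x, y⟫ ^ 2 < 1 := by
  have hlt : ⟪x, y⟫ < 1 := (inner_lt_one_iff_real_of_norm_eq_one hx hy).2 h₁.symm
  have hgt : ⟪-x, y⟫ < 1 :=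
    (inner_lt_one_iff_real_of_norm_eq_one (by rwa [norm_neg]) hy).2 h₂.symm
  rw [inner_neg_left] at hgt
  rw [sq_lt_one_iff_abs_lt_one, abs_lt]
  constructor <;> linarith

theorem Submodule.exists_norm_eq_one_mem_orthogonal (K : Submodule ℝ H)
    [K.HasOrthogonalProjection] (hK : K ≠ ⊤) : ∃ w ∈ Kᗮ, ‖w‖ = 1 := by
  obtain ⟨v, hv, hv0⟩ := (Submodule.ne_bot_iff _).1 (mt K.orthogonal_eq_bot_iff.1 hK)
  exact ⟨‖v‖⁻¹ • v, Kᗮ.smul_mem _ hv, norm_smul_inv_norm hv0⟩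

theorem exists_norm_eq_one_forall_inner_eq_zero (s : Finset H)
    (hs : (s.card : Cardinal) < Module.rank ℝ H) :
    ∃ w : H, ‖w‖ = 1 ∧ ∀ x ∈ s, ⟪x, w⟫ = 0 := by
  have hK : Submodule.span ℝ (s : Set H) ≠ ⊤ := by
    intro hK
    have := rank_span_finset_le (R := ℝ) s
    rw [hK, rank_top] at this
    exact this.not_gt hs
  obtain ⟨w, hwK, hw⟩ := Submodule.exists_norm_eq_one_mem_orthogonal _ hK
  exact ⟨w, hw, fun x hx => hwK x (Submodule.subset_span hx)⟩

theorem exists_norm_eq_one_inner_eq_of_orthogonal {ξ η w : H} (hξ : ‖ξ‖ = 1) (hη : ‖η‖ = 1)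
    (hw : ‖w‖ = 1) (hξw : ⟪ξ, w⟫ = 0) (hηw : ⟪η, w⟫ = 0) {a : ℝ} (ha : a ^ 2 ≤ 1) :
    ∃ η' : H, ‖η'‖ = 1 ∧ ⟪ξ, η'⟫ = ⟪ξ, η⟫ ∧
      ⟪η, η'⟫ = ⟪ξ, η⟫ ^ 2 + a * (1 - ⟪ξ, η⟫ ^ 2) := by
  set c := ⟪ξ, η⟫
  have hc : c ^ 2 ≤ 1 := by
    have := abs_real_inner_le_norm ξ η
    rw [hξ, hη, one_mul] at this
    nlinarith [abs_nonneg c, sq_abs c]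
  set b := √((1 - a ^ 2) * (1 - c ^ 2))
  have hb : b ^ 2 = (1 - a ^ 2) * (1 - c ^ 2) := sq_sqrt (by nlinarith)
  have hξξ : ⟪ξ, ξ⟫ = 1 := inner_self_eq_one_of_norm_eq_one hξ
  have hηη : ⟪η, η⟫ = 1 := inner_self_eq_one_of_norm_eq_one hη
  have hww : ⟪w, w⟫ = 1 := inner_self_eq_one_of_norm_eq_one hw
  have hηξ : ⟪η, ξ⟫ = c := real_inner_comm _ _
  -- `b` is chosen so that the three orthogonal components have squared norms summing to `1`.
  refine ⟨c • ξ + a • (η - c • ξ) + b • w, ?_, ?_, ?_⟩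
  · rw [← pow_eq_one_iff_of_nonneg (norm_nonneg _) two_ne_zero, ← real_inner_self_eq_norm_sq]
    simp only [inner_add_left, inner_add_right, inner_sub_left, inner_sub_right,
      real_inner_smul_left, real_inner_smul_right, real_inner_comm _ w, hξξ, hηη, hww, hηξ,
      hξw, hηw]
    linear_combination hb
  · simp only [inner_add_right, inner_sub_right, real_inner_smul_right, hξξ, hξw]
    ring
  · simp only [inner_add_right, inner_sub_right, real_inner_smul_right, hηη, hηξ, hηw]
    ring

theorem exists_norm_eq_one_inner_eq {ξ η w : H} (hξ : ‖ξ‖ = 1) (hη : ‖η‖ = 1)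
    (hc : ⟪ξ, η⟫ ^ 2 < 1) (hw : ‖w‖ = 1) (hξw : ⟪ξ, w⟫ = 0) (hηw : ⟪η, w⟫ = 0) {t : ℝ}
    (ht : t ∈ Icc (2 * ⟪ξ, η⟫ ^ 2 - 1) 1) :
    ∃ η' : H, ‖η'‖ = 1 ∧ ⟪ξ, η'⟫ = ⟪ξ, η⟫ ∧ ⟪η, η'⟫ = t := by
  set c := ⟪ξ, η⟫
  have hs : 0 < 1 - c ^ 2 := by linarith
  set a := (t - c ^ 2) / (1 - c ^ 2)
  have ha : a ^ 2 ≤ 1 := by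
    rw [sq_le_one_iff_abs_le_one, abs_le, le_div_iff₀ hs, div_le_one hs]
    constructor <;> linarith [ht.1, ht.2]
  obtain ⟨η', h1, h2, h3⟩ := exists_norm_eq_one_inner_eq_of_orthogonal hξ hη hw hξw hηw ha
  refine ⟨η', h1, h2, ?_⟩
  rw [h3, div_mul_cancel₀ _ hs.ne']
  ring

theorem eventually_lt_cos_pi_div_two_pow {r : ℝ} (hr : r < 1) :
    ∀ᶠ k : ℕ in atTop, r < cos (π / 2 ^ k) := by
  have h : Tendsto (fun k : ℕ => π / 2 ^ k) atTop (𝓝 0) :=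
    tendsto_const_nhds.div_atTop (tendsto_pow_atTop_atTop_of_one_lt one_lt_two)
  have := (continuous_cos.tendsto 0).comp h
  rw [cos_zero] at this
  exact this.eventually_const_lt hr

end

theorem exists_dyadic_angle_vector
    {H : Type*} [NormedAddCommGroup H] [InnerProductSpace ℝ H]
    (hdim : 3 ≤ Module.rank ℝ H)
    (ξ η : H) (hξ : ‖ξ‖ = 1) (hη : ‖η‖ = 1)
    (h1 : η ≠ ξ) (h2 : η ≠ -ξ) :
    ∃ k : ℕ, 1 ≤ k ∧ ∃ η' : H, ‖η'‖ = 1 ∧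
      ⟪ξ, η'⟫ = ⟪ξ, η⟫ ∧ ⟪η, η'⟫ = Real.cos (π / 2 ^ k) := by
  classical
  have hc := sq_real_inner_lt_one_of_ne hξ hη h1 h2
  obtain ⟨w, hw, hw0⟩ := exists_norm_eq_one_forall_inner_eq_zero {ξ, η} <|
    calc (({ξ, η} : Finset H).card : Cardinal) ≤ 2 := by exact_mod_cast Finset.card_le_two
      _ < 3 := by norm_num
      _ ≤ Module.rank ℝ H := hdim
  obtain ⟨k, hk, hk1⟩ :=
    ((eventually_lt_cos_pi_div_two_pow (by linarith : 2 * ⟪ξ, η⟫ ^ 2 - 1 < 1)).and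
      (eventually_ge_atTop 1)).exists
  obtain ⟨η', h⟩ := exists_norm_eq_one_inner_eq hξ hη hc hw (hw0 ξ (by simp)) (hw0 η (by simp))
    ⟨hk.le, cos_le_one _⟩
  exact ⟨k, hk1, η', h⟩
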